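/- arXiv:1810.03907 — 3 statements merged into one kernel-verified Lean document; each statement's English description precedes it below -/
import Mathlib

section
/- (A priori estimate form of Corollary 2.2.) For every M ∈ ℤ⁺ and all A₁, A₂, T > 0 there exists c = c(A₁, A₂, T) > 0 such that: if b : ℝ → ℂ satisfies hypothesis (H) with constants M, A₁, A₂, if f : ℝ × [0,T] → ℂ is continuous and, for each t, f(·,t) is a Schwartz function depending continuously on t, and if u : ℝ × [0,T] → ℂ is C¹ in t and C² in x, with u(·,t) Schwartz for each t, and satisfies pointwise ∂_t u = i ∂_x² u + b(x) ∂_x u + f(x,t) on ℝ × [0,T], then sup_{t∈[0,T]} ‖u(·,t)‖₂ ≤ c ( ‖u(·,0)‖₂ + ∫₀^T ‖f(·,t)‖₂ dt ). -/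
/-!
Let `w = exp (∫₀ˣ Im b)`. Under (H), `‖b‖_{L¹} ≤ 3 A₂`, so `e^{-3A₂} ≤ w ≤ e^{3A₂}` and the
weighted norm `N(t) = ∫ w |u(t)|²` is equivalent to the `L²` norm. The weight is chosen so that
`w' = (Im b) w`: then `P = w (Re b |u|² + 2⟪u, i u'⟫)` has derivative
`w · 2⟪u, i u'' + b u'⟫ + w (Im b Re b + Re b') |u|²`, and integrating over `ℝ` shows that the
dispersive term and the first-order drift contribute only the bounded potential
`Im b Re b + Re b'`. Hence `N' ≤ K N + 2 √N ‖f(t)‖_{L²(w)}` with `K = A₁² + A₁`, and Gronwall's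
inequality for `√N` yields the estimate.
-/

open MeasureTheory

/-- Hypothesis (H) on the coefficient `b : ℝ → ℂ` with constants `M ∈ ℤ⁺`, `A₁, A₂ > 0`:
`b` is `M` times continuously differentiable with `∑_{k=0}^{M} sup_x |b^{(k)}(x)| ≤ A₁`,
and `b = ∑_{j∈ℤ} α_j φ_j` with each `φ_j` a `C^M` function supported in `[j-1, j+2]`
satisfying `∑_{k=0}^{M} sup_x |φ_j^{(k)}(x)| ≤ 1`, and `∑_{j∈ℤ} |α_j| ≤ A₂`. -/
def HypothesisH (M : ℕ) (A₁ A₂ : ℝ) (b : ℝ → ℂ) : Prop :=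
  ContDiff ℝ M b ∧
  (∃ B : ℕ → ℝ, (∀ k ≤ M, ∀ x : ℝ, ‖iteratedDeriv k b x‖ ≤ B k) ∧
      ∑ k ∈ Finset.range (M + 1), B k ≤ A₁) ∧
  ∃ (α : ℤ → ℂ) (φ : ℤ → ℝ → ℂ),
    (∀ j, ContDiff ℝ M (φ j)) ∧
    (∀ j : ℤ, ∀ x : ℝ, x ∉ Set.Icc ((j : ℝ) - 1) ((j : ℝ) + 2) → φ j x = 0) ∧
    (∀ j, ∃ B : ℕ → ℝ, (∀ k ≤ M, ∀ x : ℝ, ‖iteratedDeriv k (φ j) x‖ ≤ B k) ∧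
        ∑ k ∈ Finset.range (M + 1), B k ≤ 1) ∧
    (∃ A : ℝ, HasSum (fun j => ‖α j‖) A ∧ A ≤ A₂) ∧
    (∀ x : ℝ, HasSum (fun j => α j * φ j x) (b x))

open Set Filter Topology Complex
open scoped SchwartzMap

local notation "∂ₓ" => SchwartzMap.derivCLM ℝ ℂ

theorem norm_iteratedDeriv_le_of_sum_le {F : Type*} [NormedAddCommGroup F] [NormedSpace ℝ F]
    {f : ℝ → F} {M : ℕ} {A : ℝ} {B : ℕ → ℝ} (hB : ∀ k ≤ M, ∀ x, ‖iteratedDeriv k f x‖ ≤ B k)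
    (hA : ∑ k ∈ Finset.range (M + 1), B k ≤ A) {k : ℕ} (hk : k ≤ M) (x : ℝ) :
    ‖iteratedDeriv k f x‖ ≤ A := by
  have hB₀ : ∀ i ∈ Finset.range (M + 1), 0 ≤ B i := fun i hi =>
    (norm_nonneg _).trans (hB i (Finset.mem_range_succ_iff.1 hi) x)
  exact (hB k hk x).trans
    ((Finset.single_le_sum hB₀ (Finset.mem_range_succ_iff.2 hk)).trans hA)

theorem lintegral_enorm_le_tsum_of_hasSum {ι X G : Type*} [Countable ι] [MeasurableSpace X]
    {μ : Measure X} [NormedAddCommGroup G] {f : ι → X → G} {g : X → G}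
    (hf : ∀ i, AEMeasurable (fun x => ‖f i x‖ₑ) μ) (hg : ∀ x, HasSum (fun i => f i x) (g x)) :
    ∫⁻ x, ‖g x‖ₑ ∂μ ≤ ∑' i, ∫⁻ x, ‖f i x‖ₑ ∂μ := by
  rw [← lintegral_tsum hf]
  refine lintegral_mono fun x => ?_
  rw [← (hg x).tsum_eq]
  exact enorm_tsum_le_tsum_enorm

theorem lintegral_enorm_le_of_eq_zero_off_Icc {G : Type*} [NormedAddCommGroup G] {φ : ℝ → G}
    {a b : ℝ} (hφ : ∀ x ∉ Icc a b, φ x = 0) (hφ₁ : ∀ x, ‖φ x‖ ≤ 1) :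
    ∫⁻ x, ‖φ x‖ₑ ≤ ENNReal.ofReal (b - a) := by
  have hsupp : Function.support (fun x => ‖φ x‖ₑ) ⊆ Icc a b := fun x hx => by
    by_contra h
    exact hx (by simp [hφ x h])
  rw [← setLIntegral_eq_of_support_subset hsupp, ← Real.volume_Icc, ← setLIntegral_one]
  refine setLIntegral_mono measurable_const fun x _ => ?_
  rw [← ofReal_norm]
  exact ENNReal.ofReal_le_one.2 (hφ₁ x)

namespace HypothesisH

variable {M : ℕ} {A₁ A₂ : ℝ} {b : ℝ → ℂ}

theorem norm_le (hb : HypothesisH M A₁ A₂ b) (x : ℝ) : ‖b x‖ ≤ A₁ := by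
  obtain ⟨-, ⟨B, hB, hA⟩, -⟩ := hb
  simpa using norm_iteratedDeriv_le_of_sum_le hB hA (Nat.zero_le M) x

theorem norm_deriv_le (hb : HypothesisH M A₁ A₂ b) (hM : 1 ≤ M) (x : ℝ) :
    ‖deriv b x‖ ≤ A₁ := by
  obtain ⟨-, ⟨B, hB, hA⟩, -⟩ := hb
  simpa using norm_iteratedDeriv_le_of_sum_le hB hA hM x

theorem lintegral_enorm_le (hb : HypothesisH M A₁ A₂ b) :
    ∫⁻ x, ‖b x‖ₑ ≤ ENNReal.ofReal (3 * A₂) := by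
  obtain ⟨-, -, α, φ, hφ, hsupp, hbound, ⟨A, hA, hAA₂⟩, hsum⟩ := hb
  have hφ₃ : ∀ j, ∫⁻ x, ‖φ j x‖ₑ ≤ 3 := fun j => by
    obtain ⟨B, hB, hB₁⟩ := hbound j
    have h := lintegral_enorm_le_of_eq_zero_off_Icc (hsupp j)
      fun x => by simpa using norm_iteratedDeriv_le_of_sum_le hB hB₁ (Nat.zero_le M) x
    rwa [show (j : ℝ) + 2 - (j - 1) = 3 by ring, ENNReal.ofReal_ofNat] at h
  calc ∫⁻ x, ‖b x‖ₑ ≤ ∑' j, ∫⁻ x, ‖α j * φ j x‖ₑ :=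
        lintegral_enorm_le_tsum_of_hasSum
          (fun j => ((continuous_const.mul (hφ j).continuous).enorm).aemeasurable) hsum
    _ ≤ ∑' j, ‖α j‖ₑ * 3 := by
        refine ENNReal.tsum_le_tsum fun j => ?_
        simp_rw [enorm_mul]
        rw [lintegral_const_mul' _ _ enorm_ne_top]
        gcongr
        exact hφ₃ j
    _ = ENNReal.ofReal A * 3 := by
        rw [ENNReal.tsum_mul_right, ← hA.tsum_eq,
          ENNReal.ofReal_tsum_of_nonneg (fun j => norm_nonneg _) hA.summable]
        simp
    _ ≤ ENNReal.ofReal (3 * A₂) := by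
        rw [mul_comm, ENNReal.ofReal_mul zero_le_three, ENNReal.ofReal_ofNat]
        gcongr

theorem integrable (hb : HypothesisH M A₁ A₂ b) : Integrable b :=
  ⟨hb.1.continuous.aestronglyMeasurable, hb.lintegral_enorm_le.trans_lt ENNReal.ofReal_lt_top⟩

theorem integral_norm_le (hb : HypothesisH M A₁ A₂ b) : ∫ x, ‖b x‖ ≤ 3 * A₂ := by
  have hA₂ : 0 ≤ A₂ := by
    obtain ⟨-, -, _, _, -, -, -, ⟨A, hA, hAA₂⟩, -⟩ := hb
    exact (hA.tsum_eq ▸ tsum_nonneg fun _ => norm_nonneg _).trans hAA₂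
  rw [integral_norm_eq_lintegral_enorm hb.1.continuous.aestronglyMeasurable]
  exact ENNReal.toReal_le_of_le_ofReal (by positivity) hb.lintegral_enorm_le

end HypothesisH

noncomputable def expPrimitive (g : ℝ → ℝ) (x : ℝ) : ℝ := Real.exp (∫ y in (0 : ℝ)..x, g y)

theorem hasDerivAt_expPrimitive {g : ℝ → ℝ} (hg : Continuous g) (x : ℝ) :
    HasDerivAt (expPrimitive g) (g x * expPrimitive g x) x := by
  rw [mul_comm]
  exact (hg.integral_hasStrictDerivAt 0 x).hasDerivAt.exp

theorem continuous_expPrimitive {g : ℝ → ℝ} (hg : Continuous g) : Continuous (expPrimitive g) :=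
  continuous_iff_continuousAt.2 fun x => (hasDerivAt_expPrimitive hg x).continuousAt

theorem expPrimitive_pos (g : ℝ → ℝ) (x : ℝ) : 0 < expPrimitive g x := Real.exp_pos _

theorem abs_intervalIntegral_le_integral_abs {g : ℝ → ℝ} (hg : Integrable g) (a b : ℝ) :
    |∫ y in a..b, g y| ≤ ∫ y, |g y| :=
  intervalIntegral.norm_integral_le_integral_norm_uIoc.trans
    (setIntegral_le_integral hg.norm (ae_of_all _ fun _ => norm_nonneg _))

theorem expPrimitive_le {g : ℝ → ℝ} (hg : Integrable g) (x : ℝ) :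
    expPrimitive g x ≤ Real.exp (∫ y, |g y|) :=
  Real.exp_le_exp.2 (le_of_abs_le (abs_intervalIntegral_le_integral_abs hg 0 x))

theorem exp_neg_le_expPrimitive {g : ℝ → ℝ} (hg : Integrable g) (x : ℝ) :
    Real.exp (-∫ y, |g y|) ≤ expPrimitive g x :=
  Real.exp_le_exp.2 (neg_le_of_abs_le (abs_intervalIntegral_le_integral_abs hg 0 x))

theorem le_exp_mul_mul_add_integral_of_deriv_le {n n' L : ℝ → ℝ} {a T t : ℝ} (ha : 0 ≤ a)
    (hn : ContinuousOn n (Icc 0 T)) (hn' : ∀ s ∈ Ioo 0 T, HasDerivAt n (n' s) s)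
    (hL : Continuous L) (hL₀ : ∀ s, 0 ≤ L s) (hle : ∀ s ∈ Ioo 0 T, n' s ≤ a * n s + L s)
    (ht : t ∈ Icc 0 T) :
    n t ≤ Real.exp (a * t) * (n 0 + ∫ s in (0 : ℝ)..t, L s) := by
  set Φ : ℝ → ℝ := fun s => Real.exp (-(a * s)) * n s - ∫ σ in (0 : ℝ)..s, L σ
  have hΦ' : ∀ s ∈ Ioo 0 T, HasDerivAt Φ
      (-a * Real.exp (-(a * s)) * n s + Real.exp (-(a * s)) * n' s - L s) s := fun s hs => by
    have he : HasDerivAt (fun s => Real.exp (-(a * s))) (-a * Real.exp (-(a * s))) s := by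
      simpa [mul_comm] using ((hasDerivAt_id s).const_mul a).neg.exp
    exact (he.mul (hn' s hs)).sub (hL.integral_hasStrictDerivAt 0 s).hasDerivAt
  have hΦ : AntitoneOn Φ (Icc 0 T) := by
    refine antitoneOn_of_hasDerivWithinAt_nonpos (convex_Icc 0 T) ?_
      (fun s hs => (hΦ' s (by simpa using hs)).hasDerivWithinAt) fun s hs => ?_
    · have hI := intervalIntegral.continuous_primitive (μ := volume)
        (fun _ _ => hL.intervalIntegrable _ _) 0
      exact ((Real.continuous_exp.comp (continuous_const.mul continuous_id).neg).continuousOn.mul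
        hn).sub hI.continuousOn
    · rw [interior_Icc] at hs
      have he₀ : 0 < Real.exp (-(a * s)) := Real.exp_pos _
      have he₁ : Real.exp (-(a * s)) ≤ 1 := Real.exp_le_one_iff.2 (by nlinarith [hs.1])
      nlinarith [mul_le_mul_of_nonneg_left (hle s hs) he₀.le, hL₀ s]
  have hΦt : Φ t ≤ Φ 0 := hΦ ⟨le_rfl, ht.1.trans ht.2⟩ ht ht.1
  simp only [Φ, mul_zero, neg_zero, Real.exp_zero, one_mul, intervalIntegral.integral_same,
    sub_zero] at hΦt
  calc n t = Real.exp (a * t) * (Real.exp (-(a * t)) * n t) := by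
        rw [← mul_assoc, ← Real.exp_add, add_neg_cancel, Real.exp_zero, one_mul]
    _ ≤ Real.exp (a * t) * (n 0 + ∫ s in (0 : ℝ)..t, L s) := by
        gcongr
        linarith

theorem sqrt_le_exp_mul_mul_add_integral_of_deriv_le {N N' L : ℝ → ℝ} {K T t : ℝ} (hK : 0 ≤ K)
    (hN : ContinuousOn N (Icc 0 T)) (hN₀ : ∀ s ∈ Ioo 0 T, 0 ≤ N s)
    (hN' : ∀ s ∈ Ioo 0 T, HasDerivAt N (N' s) s) (hL : Continuous L) (hL₀ : ∀ s, 0 ≤ L s)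
    (hle : ∀ s ∈ Ioo 0 T, N' s ≤ K * N s + 2 * (√(N s) * L s)) (ht : t ∈ Icc 0 T) :
    √(N t) ≤ Real.exp (K / 2 * t) * (√(N 0) + ∫ s in (0 : ℝ)..t, L s) := by
  -- `√N` need not be differentiable where `N` vanishes, so we work with `√(N + δ)`, `δ → 0`.
  have hδ : ∀ δ > 0,
      √(N t) ≤ Real.exp (K / 2 * t) * (√(N 0 + δ) + ∫ s in (0 : ℝ)..t, L s) := by
    intro δ hδ
    refine (Real.sqrt_le_sqrt (by linarith : N t ≤ N t + δ)).trans ?_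
    refine le_exp_mul_mul_add_integral_of_deriv_le (n' := fun s => N' s / (2 * √(N s + δ)))
      (by positivity) (hN.add continuousOn_const).sqrt (fun s hs => ?_) hL hL₀
      (fun s hs => ?_) ht
    · exact (hN' s hs).add_const δ |>.sqrt (by linarith [hN₀ s hs])
    · have hpos : 0 < √(N s + δ) := Real.sqrt_pos.2 (by linarith [hN₀ s hs])
      have hsq : √(N s + δ) ^ 2 = N s + δ := Real.sq_sqrt (by linarith [hN₀ s hs])
      have hroot : √(N s) ≤ √(N s + δ) := Real.sqrt_le_sqrt (by linarith)
      show N' s / (2 * √(N s + δ)) ≤ K / 2 * √(N s + δ) + L s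
      rw [div_le_iff₀ (by positivity)]
      nlinarith [hle s hs, mul_le_mul_of_nonneg_right hroot (hL₀ s), mul_nonneg hK hδ.le]
  have hlim : Tendsto (fun δ => Real.exp (K / 2 * t) * (√(N 0 + δ) + ∫ s in (0 : ℝ)..t, L s))
      (𝓝[>] 0) (𝓝 (Real.exp (K / 2 * t) * (√(N 0) + ∫ s in (0 : ℝ)..t, L s))) := by
    refine tendsto_nhdsWithin_of_tendsto_nhds (Continuous.tendsto' ?_ 0 _ (by simp))
    fun_prop
  exact ge_of_tendsto hlim (eventually_nhdsWithin_of_forall hδ)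

theorem intervalIntegral_le_setIntegral_Icc {f : ℝ → ℝ} (hf : Continuous f) (hf₀ : ∀ s, 0 ≤ f s)
    {a t T : ℝ} (ht : t ∈ Icc a T) : ∫ s in a..t, f s ≤ ∫ s in Icc a T, f s := by
  rw [intervalIntegral.integral_of_le ht.1]
  exact setIntegral_mono_set hf.integrableOn_Icc (ae_of_all _ fun s => hf₀ s)
    (Ioc_subset_Icc_self.trans (Icc_subset_Icc_right ht.2)).eventuallyLE

theorem mul_le_mul_inv_one_add_sq {a b C C' x : ℝ} (ha : 0 ≤ a) (hb : 0 ≤ b)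
    (haC : a ≤ C * (1 + x ^ 2)⁻¹) (hbC' : b ≤ C' * (1 + x ^ 2)⁻¹) :
    a * b ≤ C * C' * (1 + x ^ 2)⁻¹ := by
  have hg₀ : 0 < (1 + x ^ 2)⁻¹ := by positivity
  have hg₁ : (1 + x ^ 2)⁻¹ ≤ 1 := inv_le_one_of_one_le₀ (by nlinarith)
  have hC : 0 ≤ C := nonneg_of_mul_nonneg_left (ha.trans haC) hg₀
  calc a * b ≤ C * (1 + x ^ 2)⁻¹ * (C' * (1 + x ^ 2)⁻¹) := mul_le_mul haC hbC' hb (by positivity)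
    _ ≤ C * 1 * (C' * (1 + x ^ 2)⁻¹) := by
        gcongr
        exact hb.trans hbC'
    _ = C * C' * (1 + x ^ 2)⁻¹ := by ring

theorem integrable_of_norm_le_mul_inv_one_add_sq {G : Type*} [NormedAddCommGroup G] {f : ℝ → G}
    (hf : AEStronglyMeasurable f) {C : ℝ} (hC : ∀ x, ‖f x‖ ≤ C * (1 + x ^ 2)⁻¹) : Integrable f :=
  (integrable_inv_one_add_sq.const_mul C).mono' hf (ae_of_all _ hC)

theorem integral_mul_le_sqrt_mul_sqrt {α : Type*} [MeasurableSpace α] {μ : Measure α}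
    {f g : α → ℝ} (hf₀ : 0 ≤ f) (hg₀ : 0 ≤ g) (hf : MemLp f 2 μ) (hg : MemLp g 2 μ) :
    ∫ x, f x * g x ∂μ ≤ √(∫ x, f x ^ 2 ∂μ) * √(∫ x, g x ^ 2 ∂μ) := by
  have h := integral_mul_le_Lp_mul_Lq_of_nonneg Real.HolderConjugate.two_two
    (ae_of_all _ hf₀) (ae_of_all _ hg₀) (by simpa using hf) (by simpa using hg)
  simpa [Real.sqrt_eq_rpow] using h

section SchwartzCurve

variable {F : Type*} [NormedAddCommGroup F] [NormedSpace ℝ F] {w : ℝ → ℝ} {E : ℝ}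

theorem continuous_apply_schwartzMap {X : Type*} [TopologicalSpace X] {V : X → 𝓢(ℝ, F)}
    (hV : Continuous V) (x : ℝ) : Continuous fun t => V t x :=
  ((continuous_eval_const x).comp
    (SchwartzMap.toBoundedContinuousFunctionCLM ℝ ℝ F).continuous).comp hV

theorem exists_norm_le_mul_inv_one_add_sq {X : Type*} [TopologicalSpace X] {V : X → 𝓢(ℝ, F)}
    (hV : Continuous V) {S : Set X} (hS : IsCompact S) :
    ∃ C, ∀ t ∈ S, ∀ x, ‖V t x‖ ≤ C * (1 + x ^ 2)⁻¹ := by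
  set q : X → ℝ := fun t => SchwartzMap.seminorm ℝ 0 0 (V t) + SchwartzMap.seminorm ℝ 2 0 (V t)
  have hq : Continuous q :=
    (((schwartz_withSeminorms ℝ ℝ F).continuous_seminorm (0, 0)).comp hV).add
      (((schwartz_withSeminorms ℝ ℝ F).continuous_seminorm (2, 0)).comp hV)
  obtain ⟨C, hC⟩ := hS.exists_bound_of_continuousOn hq.continuousOn
  refine ⟨C, fun t ht x => ?_⟩
  rw [le_mul_inv_iff₀ (by positivity)]
  have h₀ := SchwartzMap.norm_le_seminorm ℝ (V t) x
  have h₂ := SchwartzMap.norm_pow_mul_le_seminorm ℝ (V t) 2 x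
  rw [Real.norm_eq_abs, sq_abs] at h₂
  linarith [le_abs_self (q t), hC t ht, Real.norm_eq_abs (q t)]

theorem integrable_mul_norm_sq {h : ℝ → ℝ} (hh : AEStronglyMeasurable h) (hE : ∀ x, |h x| ≤ E)
    (u : 𝓢(ℝ, F)) : Integrable fun x => h x * ‖u x‖ ^ 2 :=
  ((u.memLp ((2 : ℕ) : ENNReal)).integrable_norm_pow two_ne_zero).bdd_mul hh (ae_of_all _ hE)

theorem continuous_integral_mul_norm_sq (hw : AEStronglyMeasurable w) (hwE : ∀ x, |w x| ≤ E)
    {V : ℝ → 𝓢(ℝ, F)} (hV : Continuous V) : Continuous fun s => ∫ x, w x * ‖V s x‖ ^ 2 := by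
  refine continuous_iff_continuousAt.2 fun t => ?_
  obtain ⟨C, hC⟩ := exists_norm_le_mul_inv_one_add_sq hV (isCompact_closedBall t 1)
  refine continuousAt_of_dominated (bound := fun x => E * (C * C * (1 + x ^ 2)⁻¹))
    (Eventually.of_forall fun s => hw.mul ((V s).continuous.norm.pow 2).aestronglyMeasurable)
    ?_ ((integrable_inv_one_add_sq.const_mul _).const_mul _)
    (ae_of_all _ fun x => ((continuous_const.mul
      ((continuous_apply_schwartzMap hV x).norm.pow 2))).continuousAt)
  filter_upwards [Metric.closedBall_mem_nhds t one_pos] with s hs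
  refine ae_of_all _ fun x => ?_
  rw [norm_mul, Real.norm_eq_abs, norm_pow, norm_norm, sq]
  exact mul_le_mul (hwE x) (mul_le_mul_inv_one_add_sq (norm_nonneg _) (norm_nonneg _)
    (hC s hs x) (hC s hs x)) (by positivity) ((abs_nonneg _).trans (hwE x))

theorem sqrt_integral_mul_norm_sq_le (hw : AEStronglyMeasurable w) (hw₀ : ∀ x, 0 ≤ w x)
    (hwE : ∀ x, w x ≤ E) (u : 𝓢(ℝ, F)) :
    √(∫ x, w x * ‖u x‖ ^ 2) ≤ √E * √(∫ x, ‖u x‖ ^ 2) := by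
  rw [← Real.sqrt_mul ((hw₀ 0).trans (hwE 0)), ← integral_const_mul]
  exact Real.sqrt_le_sqrt (integral_mono
    (integrable_mul_norm_sq hw (fun x => (abs_of_nonneg (hw₀ x)).trans_le (hwE x)) u)
    (((u.memLp ((2 : ℕ) : ENNReal)).integrable_norm_pow two_ne_zero).const_mul E)
    fun x => mul_le_mul_of_nonneg_right (hwE x) (sq_nonneg _))

theorem sqrt_integral_norm_sq_le (hw : AEStronglyMeasurable w) (hw₀ : ∀ x, 0 ≤ w x)
    (hwE : ∀ x, w x ≤ E) (hw₁ : ∀ x, 1 ≤ E * w x) (u : 𝓢(ℝ, F)) :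
    √(∫ x, ‖u x‖ ^ 2) ≤ √E * √(∫ x, w x * ‖u x‖ ^ 2) := by
  rw [← Real.sqrt_mul ((hw₀ 0).trans (hwE 0)), ← integral_const_mul]
  refine Real.sqrt_le_sqrt (integral_mono
    ((u.memLp ((2 : ℕ) : ENNReal)).integrable_norm_pow two_ne_zero)
    ((integrable_mul_norm_sq hw (fun x => (abs_of_nonneg (hw₀ x)).trans_le (hwE x)) u).const_mul E)
    fun x => ?_)
  rw [← mul_assoc]
  exact le_mul_of_one_le_left (sq_nonneg _) (hw₁ x)

end SchwartzCurve

section InnerProduct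

variable {F : Type*} [NormedAddCommGroup F] [InnerProductSpace ℝ F] {w : ℝ → ℝ} {E : ℝ}

theorem hasDerivAt_integral_mul_norm_sq (hw : AEStronglyMeasurable w) (hwE : ∀ x, |w x| ≤ E)
    {V D : ℝ → ℝ → F} {t C C' : ℝ} {S : Set ℝ} (hS : S ∈ 𝓝 t)
    (hVm : ∀ s ∈ S, Continuous (V s)) (hDm : Continuous (D t))
    (hV : ∀ s ∈ S, ∀ x, ‖V s x‖ ≤ C * (1 + x ^ 2)⁻¹)
    (hD : ∀ s ∈ S, ∀ x, ‖D s x‖ ≤ C' * (1 + x ^ 2)⁻¹)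
    (hVD : ∀ s ∈ S, ∀ x, HasDerivAt (fun σ => V σ x) (D s x) s) :
    HasDerivAt (fun s => ∫ x, w x * ‖V s x‖ ^ 2)
      (∫ x, w x * (2 * inner ℝ (V t x) (D t x))) t := by
  have hE : 0 ≤ E := (abs_nonneg _).trans (hwE 0)
  have ht : t ∈ S := mem_of_mem_nhds hS
  refine (hasDerivAt_integral_of_dominated_loc_of_deriv_le
    (bound := fun x => E * (2 * (C * C' * (1 + x ^ 2)⁻¹))) hS
    (eventually_of_mem hS fun s hs => hw.mul ((hVm s hs).norm.pow 2).aestronglyMeasurable)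
    ?_ (hw.mul (((hVm t ht).inner hDm).const_mul 2).aestronglyMeasurable)
    (ae_of_all _ fun x s hs => ?_)
    (((integrable_inv_one_add_sq.const_mul _).const_mul _).const_mul _)
    (ae_of_all _ fun x s hs => ((hVD s hs x).norm_sq).const_mul (w x))).2
  · refine integrable_of_norm_le_mul_inv_one_add_sq
      (hw.mul ((hVm t ht).norm.pow 2).aestronglyMeasurable) (C := E * (C * C)) fun x => ?_
    rw [Pi.mul_apply, Pi.pow_apply, norm_mul, Real.norm_eq_abs, norm_pow, norm_norm, sq,
      mul_assoc]
    exact mul_le_mul (hwE x) (mul_le_mul_inv_one_add_sq (norm_nonneg _) (norm_nonneg _)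
      (hV t ht x) (hV t ht x)) (by positivity) hE
  · rw [norm_mul, Real.norm_eq_abs, norm_mul, Real.norm_eq_abs, abs_two]
    refine mul_le_mul (hwE x) ?_ (by positivity) hE
    gcongr
    exact (abs_real_inner_le_norm _ _).trans (mul_le_mul_inv_one_add_sq (norm_nonneg _)
      (norm_nonneg _) (hV s hs x) (hD s hs x))

theorem integrable_mul_inner {h : ℝ → ℝ} (hh : AEStronglyMeasurable h) (hE : ∀ x, |h x| ≤ E)
    (u : 𝓢(ℝ, F)) {v : ℝ → F} (hv : Integrable v) :
    Integrable fun x => h x * inner ℝ (u x) (v x) := by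
  refine (hv.norm.const_mul (E * SchwartzMap.seminorm ℝ 0 0 u)).mono'
    (hh.mul (u.continuous.aestronglyMeasurable.inner hv.1)) (ae_of_all _ fun x => ?_)
  rw [norm_mul, Real.norm_eq_abs, Real.norm_eq_abs, mul_assoc]
  exact mul_le_mul (hE x) ((abs_real_inner_le_norm _ _).trans
    (mul_le_mul_of_nonneg_right (SchwartzMap.norm_le_seminorm ℝ u x) (norm_nonneg _)))
    (abs_nonneg _) ((abs_nonneg _).trans (hE x))

theorem integral_mul_inner_le_sqrt_mul_sqrt (hw : AEStronglyMeasurable w) (hw₀ : ∀ x, 0 ≤ w x)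
    (hwE : ∀ x, w x ≤ E) (u v : 𝓢(ℝ, F)) :
    ∫ x, w x * inner ℝ (u x) (v x) ≤ √(∫ x, w x * ‖u x‖ ^ 2) * √(∫ x, w x * ‖v x‖ ^ 2) := by
  have hwE' : ∀ x, |w x| ≤ E := fun x => (abs_of_nonneg (hw₀ x)).trans_le (hwE x)
  have hsq : ∀ f : 𝓢(ℝ, F), (fun x => (√(w x) * ‖f x‖) ^ 2) = fun x => w x * ‖f x‖ ^ 2 :=
    fun f => funext fun x => by rw [mul_pow, Real.sq_sqrt (hw₀ x)]
  have hL2 : ∀ f : 𝓢(ℝ, F), MemLp (fun x => √(w x) * ‖f x‖) 2 := fun f =>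
    (memLp_two_iff_integrable_sq ((Real.continuous_sqrt.comp_aestronglyMeasurable hw).mul
      f.continuous.norm.aestronglyMeasurable)).2
      (by simpa only [Pi.mul_apply, hsq] using integrable_mul_norm_sq hw hwE' f)
  calc ∫ x, w x * inner ℝ (u x) (v x)
      ≤ ∫ x, (√(w x) * ‖u x‖) * (√(w x) * ‖v x‖) := by
        refine integral_mono (integrable_mul_inner hw hwE' u v.integrable)
          ((hL2 u).integrable_mul (hL2 v)) fun x => ?_
        rw [mul_mul_mul_comm, Real.mul_self_sqrt (hw₀ x)]
        exact mul_le_mul_of_nonneg_left (real_inner_le_norm _ _) (hw₀ x)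
    _ ≤ √(∫ x, (√(w x) * ‖u x‖) ^ 2) * √(∫ x, (√(w x) * ‖v x‖) ^ 2) :=
        integral_mul_le_sqrt_mul_sqrt (fun x => by positivity) (fun x => by positivity)
          (hL2 u) (hL2 v)
    _ = √(∫ x, w x * ‖u x‖ ^ 2) * √(∫ x, w x * ‖v x‖ ^ 2) := by rw [hsq, hsq]

end InnerProduct

noncomputable def schrodingerOp (b u : ℝ → ℂ) (x : ℝ) : ℂ :=
  I * deriv (deriv u) x + b x * deriv u x

theorem coe_derivCLM (u : 𝓢(ℝ, ℂ)) : ⇑(∂ₓ u) = deriv u :=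
  funext (SchwartzMap.derivCLM_apply ℝ u)

theorem hasDerivAt_derivCLM (u : 𝓢(ℝ, ℂ)) (x : ℝ) : HasDerivAt u (∂ₓ u x) x := by
  rw [coe_derivCLM]
  exact u.differentiableAt.hasDerivAt

theorem schrodingerOp_eq (b : ℝ → ℂ) (u : 𝓢(ℝ, ℂ)) :
    schrodingerOp b u = fun x => I * ∂ₓ (∂ₓ u) x + b x * ∂ₓ u x := by
  ext x
  rw [schrodingerOp, coe_derivCLM, coe_derivCLM]

theorem continuous_schrodingerOp {b : ℝ → ℂ} (hb : Continuous b) (u : 𝓢(ℝ, ℂ)) :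
    Continuous (schrodingerOp b u) := by
  rw [schrodingerOp_eq]
  fun_prop

theorem norm_schrodingerOp_le {b : ℝ → ℂ} {A : ℝ} (hbA : ∀ x, ‖b x‖ ≤ A) (u : 𝓢(ℝ, ℂ))
    (x : ℝ) : ‖schrodingerOp b u x‖ ≤ ‖∂ₓ (∂ₓ u) x‖ + A * ‖∂ₓ u x‖ := by
  rw [schrodingerOp_eq]
  refine (norm_add_le _ _).trans ?_
  rw [norm_mul, norm_mul, norm_I, one_mul]
  gcongr
  exact hbA x

theorem integrable_schrodingerOp {b : ℝ → ℂ} {A : ℝ} (hb : Continuous b)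
    (hbA : ∀ x, ‖b x‖ ≤ A) (u : 𝓢(ℝ, ℂ)) : Integrable (schrodingerOp b u) :=
  ((∂ₓ (∂ₓ u)).integrable.norm.add ((∂ₓ u).integrable.norm.const_mul A)).mono'
    (continuous_schrodingerOp hb u).aestronglyMeasurable
    (ae_of_all _ (norm_schrodingerOp_le hbA u))

theorem exists_norm_schrodingerOp_add_le {b : ℝ → ℂ} {A : ℝ} (hbA : ∀ x, ‖b x‖ ≤ A)
    {U F : ℝ → 𝓢(ℝ, ℂ)} (hU : Continuous U) (hF : Continuous F) {S : Set ℝ}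
    (hS : IsCompact S) :
    ∃ C, ∀ s ∈ S, ∀ x, ‖schrodingerOp b (U s) x + F s x‖ ≤ C * (1 + x ^ 2)⁻¹ := by
  have hA : 0 ≤ A := (norm_nonneg _).trans (hbA 0)
  have hU₁ : Continuous fun s => ∂ₓ (U s) := (∂ₓ).continuous.comp hU
  obtain ⟨C₂, hC₂⟩ := exists_norm_le_mul_inv_one_add_sq ((∂ₓ).continuous.comp hU₁) hS
  obtain ⟨C₁, hC₁⟩ := exists_norm_le_mul_inv_one_add_sq hU₁ hS
  obtain ⟨C₀, hC₀⟩ := exists_norm_le_mul_inv_one_add_sq hF hS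
  refine ⟨C₂ + A * C₁ + C₀, fun s hs x => ?_⟩
  calc ‖schrodingerOp b (U s) x + F s x‖
      ≤ ‖∂ₓ (∂ₓ (U s)) x‖ + A * ‖∂ₓ (U s) x‖ + ‖F s x‖ :=
        (norm_add_le _ _).trans (add_le_add_left (norm_schrodingerOp_le hbA _ x) _)
    _ ≤ C₂ * (1 + x ^ 2)⁻¹ + A * (C₁ * (1 + x ^ 2)⁻¹) + C₀ * (1 + x ^ 2)⁻¹ := by
        gcongr
        exacts [hC₂ s hs x, hC₁ s hs x, hC₀ s hs x]
    _ = (C₂ + A * C₁ + C₀) * (1 + x ^ 2)⁻¹ := by ring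

theorem abs_im_mul_re_add_re_le {z z' : ℂ} {A : ℝ} (hz : ‖z‖ ≤ A) (hz' : ‖z'‖ ≤ A) :
    |z.im * z.re + z'.re| ≤ A * A + A := by
  refine (abs_add_le _ _).trans (add_le_add ?_ ((abs_re_le_norm _).trans hz'))
  rw [abs_mul]
  exact mul_le_mul ((abs_im_le_norm _).trans hz) ((abs_re_le_norm _).trans hz) (abs_nonneg _)
    ((norm_nonneg _).trans hz)

theorem hasDerivAt_flux {b : ℝ → ℂ} {b' : ℂ} {w : ℝ → ℝ} {u u' : ℝ → ℂ} {u'' : ℂ} {x : ℝ}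
    (hb : HasDerivAt b b' x) (hw : HasDerivAt w ((b x).im * w x) x)
    (hu : HasDerivAt u (u' x) x) (hu' : HasDerivAt u' u'' x) :
    HasDerivAt (fun y => w y * ((b y).re * ‖u y‖ ^ 2 + 2 * inner ℝ (u y) (I * u' y)))
      (w x * (2 * inner ℝ (u x) (I * u'' + b x * u' x))
        + w x * ((b x).im * (b x).re + b'.re) * ‖u x‖ ^ 2) x := by
  have hre : HasDerivAt (fun y => (b y).re) b'.re x := reCLM.hasFDerivAt.comp_hasDerivAt x hb
  refine (hw.mul ((hre.mul hu.norm_sq).add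
    ((hu.inner ℝ (hu'.const_mul I)).const_mul 2))).congr_deriv ?_
  simp only [Complex.inner, mul_re, mul_im, add_re, add_im, I_re, I_im, conj_re, conj_im,
    Pi.add_apply, Pi.mul_apply, Complex.sq_norm, normSq_apply]
  ring

section Energy

variable {b : ℝ → ℂ} {w : ℝ → ℝ} {A E : ℝ}

theorem tendsto_flux_cocompact (hbA : ∀ x, ‖b x‖ ≤ A) (hwE : ∀ x, |w x| ≤ E) (u : 𝓢(ℝ, ℂ)) :
    Tendsto (fun y => w y * ((b y).re * ‖u y‖ ^ 2 + 2 * inner ℝ (u y) (I * ∂ₓ u y)))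
      (cocompact ℝ) (𝓝 0) := by
  have hA : 0 ≤ A := (norm_nonneg _).trans (hbA 0)
  have hE : 0 ≤ E := (abs_nonneg _).trans (hwE 0)
  set C₀ := SchwartzMap.seminorm ℝ 0 0 u
  set C₁ := SchwartzMap.seminorm ℝ 0 0 (∂ₓ u)
  refine squeeze_zero_norm (a := fun y => E * (A * C₀ + 2 * C₁) * ‖u y‖) (fun y => ?_)
    (by simpa using u.tendsto_cocompact.norm.const_mul (E * (A * C₀ + 2 * C₁)))
  have hu := SchwartzMap.norm_le_seminorm ℝ u y
  have hu₁ := SchwartzMap.norm_le_seminorm ℝ (∂ₓ u) y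
  have hre := (abs_re_le_norm (b y)).trans (hbA y)
  have hin := abs_real_inner_le_norm (u y) (I * ∂ₓ u y)
  rw [norm_mul, norm_I, one_mul] at hin
  rw [norm_mul, Real.norm_eq_abs, Real.norm_eq_abs, mul_assoc]
  refine mul_le_mul (hwE y) ((abs_add_le _ _).trans ?_) (abs_nonneg _) hE
  rw [abs_mul, abs_mul, abs_two, abs_pow, abs_norm]
  nlinarith [norm_nonneg (u y), norm_nonneg (∂ₓ u y), abs_nonneg (b y).re,
    mul_le_mul hre hu (norm_nonneg _) hA]

theorem integrable_mul_inner_schrodingerOp (hb : Continuous b) (hbA : ∀ x, ‖b x‖ ≤ A)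
    (hw : AEStronglyMeasurable w) (hwE : ∀ x, |w x| ≤ E) (u : 𝓢(ℝ, ℂ)) :
    Integrable fun x => w x * (2 * inner ℝ (u x) (schrodingerOp b u x)) := by
  simpa only [mul_left_comm] using
    (integrable_mul_inner hw hwE u (integrable_schrodingerOp hb hbA u)).const_mul 2

theorem integrable_mul_potential_mul_norm_sq (hb : ContDiff ℝ 1 b) (hbA : ∀ x, ‖b x‖ ≤ A)
    (hb'A : ∀ x, ‖deriv b x‖ ≤ A) (hw : Continuous w) (hwE : ∀ x, |w x| ≤ E) (u : 𝓢(ℝ, ℂ)) :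
    Integrable fun x => w x * ((b x).im * (b x).re + (deriv b x).re) * ‖u x‖ ^ 2 := by
  have hc : Continuous fun x => w x * ((b x).im * (b x).re + (deriv b x).re) := by
    have := hb.continuous_deriv le_rfl
    fun_prop
  refine integrable_mul_norm_sq hc.aestronglyMeasurable (E := E * (A * A + A)) (fun x => ?_) u
  rw [abs_mul]
  exact mul_le_mul (hwE x) (abs_im_mul_re_add_re_le (hbA x) (hb'A x)) (abs_nonneg _)
    ((abs_nonneg _).trans (hwE x))

theorem integral_mul_inner_schrodingerOp (hb : ContDiff ℝ 1 b) (hbA : ∀ x, ‖b x‖ ≤ A)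
    (hb'A : ∀ x, ‖deriv b x‖ ≤ A) (hw : ∀ x, HasDerivAt w ((b x).im * w x) x)
    (hwE : ∀ x, |w x| ≤ E) (u : 𝓢(ℝ, ℂ)) :
    ∫ x, w x * (2 * inner ℝ (u x) (schrodingerOp b u x)) =
      -∫ x, w x * ((b x).im * (b x).re + (deriv b x).re) * ‖u x‖ ^ 2 := by
  have hwc : Continuous w := continuous_iff_continuousAt.2 fun x => (hw x).continuousAt
  have hQ₁ := integrable_mul_inner_schrodingerOp hb.continuous hbA hwc.aestronglyMeasurable hwE u
  have hQ₂ := integrable_mul_potential_mul_norm_sq hb hbA hb'A hwc hwE u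
  have hP : ∀ x, HasDerivAt
      (fun y => w y * ((b y).re * ‖u y‖ ^ 2 + 2 * inner ℝ (u y) (I * ∂ₓ u y)))
      (w x * (2 * inner ℝ (u x) (schrodingerOp b u x))
        + w x * ((b x).im * (b x).re + (deriv b x).re) * ‖u x‖ ^ 2) x := fun x => by
    rw [schrodingerOp_eq]
    exact hasDerivAt_flux ((hb.differentiable one_ne_zero x).hasDerivAt) (hw x)
      (hasDerivAt_derivCLM u x) (hasDerivAt_derivCLM (∂ₓ u) x)
  have h := integral_of_hasDerivAt_of_tendsto hP (hQ₁.add hQ₂)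
    ((tendsto_flux_cocompact hbA hwE u).mono_left atBot_le_cocompact)
    ((tendsto_flux_cocompact hbA hwE u).mono_left atTop_le_cocompact)
  rw [integral_add hQ₁ hQ₂, sub_self] at h
  linarith

theorem integral_mul_inner_schrodingerOp_add_le (hb : ContDiff ℝ 1 b) (hbA : ∀ x, ‖b x‖ ≤ A)
    (hb'A : ∀ x, ‖deriv b x‖ ≤ A) (hw : ∀ x, HasDerivAt w ((b x).im * w x) x)
    (hw₀ : ∀ x, 0 ≤ w x) (hwE : ∀ x, w x ≤ E) (u f : 𝓢(ℝ, ℂ)) :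
    ∫ x, w x * (2 * inner ℝ (u x) (schrodingerOp b u x + f x)) ≤
      (A * A + A) * (∫ x, w x * ‖u x‖ ^ 2) +
        2 * (√(∫ x, w x * ‖u x‖ ^ 2) * √(∫ x, w x * ‖f x‖ ^ 2)) := by
  have hwc : Continuous w := continuous_iff_continuousAt.2 fun x => (hw x).continuousAt
  have hwE' : ∀ x, |w x| ≤ E := fun x => (abs_of_nonneg (hw₀ x)).trans_le (hwE x)
  have hsplit : (fun x => w x * (2 * inner ℝ (u x) (schrodingerOp b u x + f x))) = fun x =>
      w x * (2 * inner ℝ (u x) (schrodingerOp b u x)) + 2 * (w x * inner ℝ (u x) (f x)) := by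
    ext x
    rw [inner_add_right]
    ring
  have hpotential : -(∫ x, w x * ((b x).im * (b x).re + (deriv b x).re) * ‖u x‖ ^ 2) ≤
      (A * A + A) * ∫ x, w x * ‖u x‖ ^ 2 := by
    rw [← integral_const_mul, ← integral_neg]
    refine integral_mono (integrable_mul_potential_mul_norm_sq hb hbA hb'A hwc hwE' u).neg
      ((integrable_mul_norm_sq hwc.aestronglyMeasurable hwE' u).const_mul _) fun x => ?_
    have := neg_le_of_abs_le (abs_im_mul_re_add_re_le (hbA x) (hb'A x))
    nlinarith [mul_nonneg (hw₀ x) (sq_nonneg ‖u x‖)]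
  rw [hsplit, integral_add
      (integrable_mul_inner_schrodingerOp hb.continuous hbA hwc.aestronglyMeasurable hwE' u)
      ((integrable_mul_inner hwc.aestronglyMeasurable hwE' u f.integrable).const_mul 2),
    integral_mul_inner_schrodingerOp hb hbA hb'A hw hwE' u, integral_const_mul]
  exact add_le_add hpotential (mul_le_mul_of_nonneg_left
    (integral_mul_inner_le_sqrt_mul_sqrt hwc.aestronglyMeasurable hw₀ hwE u f) zero_le_two)

end Energy

section Evolution

variable {b : ℝ → ℂ} {A T : ℝ} {U F : ℝ → 𝓢(ℝ, ℂ)}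

theorem weighted_L2_estimate {w : ℝ → ℝ} {E : ℝ} (hb : ContDiff ℝ 1 b)
    (hbA : ∀ x, ‖b x‖ ≤ A) (hb'A : ∀ x, ‖deriv b x‖ ≤ A)
    (hw : ∀ x, HasDerivAt w ((b x).im * w x) x) (hw₀ : ∀ x, 0 ≤ w x) (hwE : ∀ x, w x ≤ E)
    (hU : Continuous U) (hF : Continuous F)
    (hUF : ∀ x, ∀ t ∈ Icc 0 T, HasDerivWithinAt (fun s => U s x)
      (schrodingerOp b (U t) x + F t x) (Icc 0 T) t) {t : ℝ} (ht : t ∈ Icc 0 T) :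
    √(∫ x, w x * ‖U t x‖ ^ 2) ≤ Real.exp ((A * A + A) / 2 * t) *
      (√(∫ x, w x * ‖U 0 x‖ ^ 2) + ∫ s in (0 : ℝ)..t, √(∫ x, w x * ‖F s x‖ ^ 2)) := by
  have hwm : AEStronglyMeasurable w :=
    (continuous_iff_continuousAt.2 fun x => (hw x).continuousAt).aestronglyMeasurable
  have hwE' : ∀ x, |w x| ≤ E := fun x => (abs_of_nonneg (hw₀ x)).trans_le (hwE x)
  have hA : 0 ≤ A := (norm_nonneg _).trans (hbA 0)
  obtain ⟨C, hC⟩ := exists_norm_le_mul_inv_one_add_sq hU (isCompact_Icc (a := 0) (b := T))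
  obtain ⟨C', hC'⟩ := exists_norm_schrodingerOp_add_le hbA hU hF (isCompact_Icc (a := 0) (b := T))
  refine sqrt_le_exp_mul_mul_add_integral_of_deriv_le (by positivity)
    (continuous_integral_mul_norm_sq hwm hwE' hU).continuousOn
    (fun s _ => integral_nonneg fun x => mul_nonneg (hw₀ x) (by positivity)) (fun s hs => ?_)
    (continuous_integral_mul_norm_sq hwm hwE' hF).sqrt (fun s => Real.sqrt_nonneg _)
    (fun s _ => integral_mul_inner_schrodingerOp_add_le hb hbA hb'A hw hw₀ hwE (U s) (F s)) ht
  exact hasDerivAt_integral_mul_norm_sq hwm hwE' (Ioo_mem_nhds hs.1 hs.2)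
    (fun σ _ => (U σ).continuous)
    ((continuous_schrodingerOp hb.continuous (U s)).add (F s).continuous)
    (fun σ hσ => hC σ (Ioo_subset_Icc_self hσ)) (fun σ hσ => hC' σ (Ioo_subset_Icc_self hσ))
    (fun σ hσ x => (hUF x σ (Ioo_subset_Icc_self hσ)).hasDerivAt (Icc_mem_nhds hσ.1 hσ.2))

theorem L2_estimate {B : ℝ} (hb : ContDiff ℝ 1 b) (hbA : ∀ x, ‖b x‖ ≤ A)
    (hb'A : ∀ x, ‖deriv b x‖ ≤ A) (hbI : Integrable b) (hbB : ∫ x, ‖b x‖ ≤ B)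
    (hU : Continuous U) (hF : Continuous F)
    (hUF : ∀ x, ∀ t ∈ Icc 0 T, HasDerivWithinAt (fun s => U s x)
      (schrodingerOp b (U t) x + F t x) (Icc 0 T) t) {t : ℝ} (ht : t ∈ Icc 0 T) :
    √(∫ x, ‖U t x‖ ^ 2) ≤ Real.exp B * Real.exp ((A * A + A) / 2 * T) *
      (√(∫ x, ‖U 0 x‖ ^ 2) + ∫ s in Icc 0 T, √(∫ x, ‖F s x‖ ^ 2)) := by
  set w := expPrimitive fun x => (b x).im
  set E := Real.exp B
  have hIm : Integrable fun x => (b x).im := hbI.im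
  have hImB : ∫ x, |(b x).im| ≤ B :=
    (integral_mono hIm.abs hbI.norm fun x => abs_im_le_norm _).trans hbB
  have hImc : Continuous fun x => (b x).im := continuous_im.comp hb.continuous
  have hwm : AEStronglyMeasurable w := (continuous_expPrimitive hImc).aestronglyMeasurable
  have hw₀ : ∀ x, 0 ≤ w x := fun x => (expPrimitive_pos _ x).le
  have hwE : ∀ x, w x ≤ E := fun x => (expPrimitive_le hIm x).trans (Real.exp_le_exp.2 hImB)
  have hw₁ : ∀ x, 1 ≤ E * w x := fun x => by
    have := (Real.exp_le_exp.2 (neg_le_neg hImB)).trans (exp_neg_le_expPrimitive hIm x)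
    calc (1 : ℝ) = E * Real.exp (-B) := by rw [← Real.exp_add, add_neg_cancel, Real.exp_zero]
      _ ≤ E * w x := by gcongr
  have hFc : Continuous fun s => √(∫ x, ‖F s x‖ ^ 2) := by
    simpa using (continuous_integral_mul_norm_sq (w := fun _ => 1) aestronglyMeasurable_const
      (fun _ => abs_one.le) hF).sqrt
  have hFwc : Continuous fun s => √(∫ x, w x * ‖F s x‖ ^ 2) :=
    (continuous_integral_mul_norm_sq hwm (fun x => (abs_of_nonneg (hw₀ x)).trans_le (hwE x))
      hF).sqrt
  have hFint : ∫ s in (0 : ℝ)..t, √(∫ x, w x * ‖F s x‖ ^ 2) ≤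
      √E * ∫ s in Icc 0 T, √(∫ x, ‖F s x‖ ^ 2) := by
    calc ∫ s in (0 : ℝ)..t, √(∫ x, w x * ‖F s x‖ ^ 2)
        ≤ ∫ s in (0 : ℝ)..t, √E * √(∫ x, ‖F s x‖ ^ 2) :=
          intervalIntegral.integral_mono_on ht.1 (hFwc.intervalIntegrable _ _)
            ((hFc.const_mul _).intervalIntegrable _ _)
            fun s _ => sqrt_integral_mul_norm_sq_le hwm hw₀ hwE (F s)
      _ = √E * ∫ s in (0 : ℝ)..t, √(∫ x, ‖F s x‖ ^ 2) := intervalIntegral.integral_const_mul _ _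
      _ ≤ √E * ∫ s in Icc 0 T, √(∫ x, ‖F s x‖ ^ 2) := by
          gcongr
          exact intervalIntegral_le_setIntegral_Icc hFc (fun _ => Real.sqrt_nonneg _) ht
  calc √(∫ x, ‖U t x‖ ^ 2)
      ≤ √E * √(∫ x, w x * ‖U t x‖ ^ 2) := sqrt_integral_norm_sq_le hwm hw₀ hwE hw₁ (U t)
    _ ≤ √E * (Real.exp ((A * A + A) / 2 * T) * (√E * √(∫ x, ‖U 0 x‖ ^ 2) +
          √E * ∫ s in Icc 0 T, √(∫ x, ‖F s x‖ ^ 2))) := by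
        gcongr
        refine (weighted_L2_estimate hb hbA hb'A (hasDerivAt_expPrimitive hImc) hw₀ hwE hU hF
          hUF ht).trans (mul_le_mul (Real.exp_le_exp.2 ?_)
            (add_le_add (sqrt_integral_mul_norm_sq_le hwm hw₀ hwE (U 0)) hFint)
            (add_nonneg (Real.sqrt_nonneg _)
              (intervalIntegral.integral_nonneg ht.1 fun _ _ => Real.sqrt_nonneg _))
            (Real.exp_pos _).le)
        have hA : 0 ≤ A := (norm_nonneg _).trans (hbA 0)
        gcongr
        exact ht.2
    _ = E * Real.exp ((A * A + A) / 2 * T) *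
          (√(∫ x, ‖U 0 x‖ ^ 2) + ∫ s in Icc 0 T, √(∫ x, ‖F s x‖ ^ 2)) := by
        have hE : √E * √E = E := Real.mul_self_sqrt (Real.exp_pos B).le
        linear_combination (Real.exp ((A * A + A) / 2 * T) *
          (√(∫ x, ‖U 0 x‖ ^ 2) + ∫ s in Icc 0 T, √(∫ x, ‖F s x‖ ^ 2))) * hE

end Evolution

theorem linear_L2_apriori_general (M : ℕ) (hM : 1 ≤ M) (A₁ A₂ T : ℝ) :
    ∃ c : ℝ, 0 < c ∧
      ∀ b : ℝ → ℂ, HypothesisH M A₁ A₂ b →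
      ∀ F : ℝ → SchwartzMap ℝ ℂ, Continuous F →
      ∀ U : ℝ → SchwartzMap ℝ ℂ, Continuous U →
      (∀ x : ℝ, ∀ t ∈ Set.Icc (0 : ℝ) T,
        HasDerivWithinAt (fun s => U s x)
          (Complex.I * deriv (deriv (⇑(U t))) x + b x * deriv (⇑(U t)) x + F t x)
          (Set.Icc (0 : ℝ) T) t) →
      ∀ t ∈ Set.Icc (0 : ℝ) T,
        Real.sqrt (∫ x : ℝ, ‖U t x‖ ^ 2) ≤
          c * (Real.sqrt (∫ x : ℝ, ‖U 0 x‖ ^ 2) +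
            ∫ s in Set.Icc (0 : ℝ) T, Real.sqrt (∫ x : ℝ, ‖F s x‖ ^ 2)) := by
  refine ⟨Real.exp (3 * A₂) * Real.exp ((A₁ * A₁ + A₁) / 2 * T), by positivity, ?_⟩
  intro b hb F hF U hU hUF t ht
  exact L2_estimate (hb.1.of_le (by exact_mod_cast hM)) hb.norm_le (hb.norm_deriv_le hM)
    hb.integrable hb.integral_norm_le hU hF hUF ht

/-- **A priori estimate form of Corollary 2.2.** For every `M ∈ ℤ⁺` and `A₁, A₂, T > 0`
there is `c = c(A₁,A₂,T) > 0` such that any solution (Schwartz in `x`, depending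
continuously on `t`, `C¹` in `t`) of `∂_t u = i∂_x²u + b(x)∂_x u + f` on `ℝ × [0,T]`,
with `b` satisfying hypothesis (H), obeys
`sup_{[0,T]} ‖u(·,t)‖₂ ≤ c (‖u(·,0)‖₂ + ∫₀ᵀ ‖f(·,t)‖₂ dt)`. -/
theorem linear_L2_apriori (M : ℕ) (hM : 1 ≤ M) (A₁ A₂ T : ℝ)
    (hA₁ : 0 < A₁) (hA₂ : 0 < A₂) (hT : 0 < T) :
    ∃ c : ℝ, 0 < c ∧
      ∀ b : ℝ → ℂ, HypothesisH M A₁ A₂ b →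
      ∀ F : ℝ → SchwartzMap ℝ ℂ, Continuous F →
      ∀ U : ℝ → SchwartzMap ℝ ℂ, Continuous U →
      (∀ x : ℝ, ∀ t ∈ Set.Icc (0 : ℝ) T,
        HasDerivWithinAt (fun s => U s x)
          (Complex.I * deriv (deriv (⇑(U t))) x + b x * deriv (⇑(U t)) x + F t x)
          (Set.Icc (0 : ℝ) T) t) →
      ∀ t ∈ Set.Icc (0 : ℝ) T,
        Real.sqrt (∫ x : ℝ, ‖U t x‖ ^ 2) ≤
          c * (Real.sqrt (∫ x : ℝ, ‖U 0 x‖ ^ 2) +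
            ∫ s in Set.Icc (0 : ℝ) T, Real.sqrt (∫ x : ℝ, ‖F s x‖ ^ 2)) :=
  linear_L2_apriori_general M hM A₁ A₂ T
end

section
/- (Lemma 2.5, first inequality.) For all integers j, k ≥ 1 there exists c = c(k,j) > 0 such that for every Schwartz function f : ℝ → ℂ, ‖⟨x⟩^k ∂_x^j f‖₂² ≤ c ‖⟨x⟩^k ∂_x^{j+1} f‖₂ · ‖⟨x⟩^k ∂_x^{j-1} f‖₂ + c ‖⟨x⟩^{k-1} ∂_x^{j-1} f‖₂². -/
open MeasureTheory

/-! Write `g = ∂^{j-1} f` and `w = ⟨x⟩^{2k}`. Integration by parts gives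
`∫ w ‖g'‖² = -∫ ⟪w' g' + w g'', g⟫`, and `|w'| ≤ 2k ⟨x⟩^k ⟨x⟩^{k-1}`, so by Cauchy–Schwarz
`A² ≤ ‖⟨x⟩^k g''‖₂ ‖⟨x⟩^k g‖₂ + 2k A B` with `A = ‖⟨x⟩^k g'‖₂` and `B = ‖⟨x⟩^{k-1} g‖₂`.
Absorbing `2k A B ≤ A²/2 + 2k² B²` into the left side gives the claim with `c = 2 + 4k²`. -/

section CauchySchwarz

variable {α F : Type*} [MeasurableSpace α] {μ : Measure α} [NormedAddCommGroup F]
  {u v : α → F}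

theorem MeasureTheory.MemLp.integrable_norm_mul_norm (hu : MemLp u 2 μ) (hv : MemLp v 2 μ) :
    Integrable (fun a => ‖u a‖ * ‖v a‖) μ :=
  hu.norm.integrable_mul hv.norm

theorem integral_norm_mul_norm_le_sqrt_mul_sqrt (hu : MemLp u 2 μ) (hv : MemLp v 2 μ) :
    ∫ a, ‖u a‖ * ‖v a‖ ∂μ ≤ √(∫ a, ‖u a‖ ^ 2 ∂μ) * √(∫ a, ‖v a‖ ^ 2 ∂μ) := by
  have h := integral_mul_norm_le_Lp_mul_Lq Real.HolderConjugate.two_two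
    (by simpa using hu) (by simpa using hv)
  simpa only [Real.sqrt_eq_rpow, ← Real.rpow_natCast, Nat.cast_ofNat, one_div] using h

end CauchySchwarz

theorem hasTemperateGrowth_sqrt_one_add_sq_pow (k : ℕ) :
    (fun x : ℝ => √(1 + x ^ 2) ^ k).HasTemperateGrowth := by
  have h : (fun x : ℝ => √(1 + x ^ 2) ^ k) = fun x : ℝ => (1 + ‖x‖ ^ 2) ^ ((k : ℝ) / 2) := by
    funext x
    rw [Real.norm_eq_abs, sq_abs, Real.sqrt_eq_rpow, ← Real.rpow_natCast,
      ← Real.rpow_mul (by positivity), one_div_mul_eq_div]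
  rw [h]
  exact Function.hasTemperateGrowth_one_add_norm_sq_rpow ℝ _

theorem hasDerivAt_one_add_sq_pow (k : ℕ) (x : ℝ) :
    HasDerivAt (fun y : ℝ => (1 + y ^ 2) ^ k) (k * (1 + x ^ 2) ^ (k - 1) * (2 * x)) x := by
  simpa using ((hasDerivAt_pow 2 x).const_add 1).fun_pow k

theorem abs_deriv_one_add_sq_pow_le (k : ℕ) (x : ℝ) :
    |k * (1 + x ^ 2) ^ (k - 1) * (2 * x)| ≤
      2 * k * (√(1 + x ^ 2) ^ k * √(1 + x ^ 2) ^ (k - 1)) := by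
  rcases k with _ | m
  · simp
  set s := √(1 + x ^ 2)
  have hs : 1 + x ^ 2 = s ^ 2 := (Real.sq_sqrt (by positivity)).symm
  have hx : |x| ≤ s := Real.abs_le_sqrt (by linarith)
  rw [Nat.add_sub_cancel, hs, abs_mul, abs_mul, abs_mul, abs_two, Nat.abs_cast,
    abs_of_nonneg (by positivity)]
  calc (m + 1 : ℕ) * (s ^ 2) ^ m * (2 * |x|) ≤ (m + 1 : ℕ) * (s ^ 2) ^ m * (2 * s) := by gcongr
    _ = _ := by ring

open SchwartzMap

section Schwartz

variable {E : Type*} [NormedAddCommGroup E]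

theorem memLp_two_sqrt_one_add_sq_pow_smul [NormedSpace ℝ E] (k : ℕ) (g : 𝓢(ℝ, E)) :
    MemLp (fun x : ℝ => √(1 + x ^ 2) ^ k • g x) 2 := by
  rw [← smulLeftCLM_apply (hasTemperateGrowth_sqrt_one_add_sq_pow k)]
  exact (smulLeftCLM E (fun x : ℝ => √(1 + x ^ 2) ^ k) g).memLp 2

theorem coe_iterate_derivCLM [NormedSpace ℝ E] (n : ℕ) (f : 𝓢(ℝ, E)) :
    ⇑((⇑(derivCLM ℝ E))^[n] f) = iteratedDeriv n f := by
  induction n with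
  | zero => rfl
  | succ n ih =>
    rw [Function.iterate_succ_apply', iteratedDeriv_succ, ← ih]
    exact funext (derivCLM_apply ℝ _)

variable [InnerProductSpace ℝ E]

theorem integral_mul_norm_deriv_sq_eq_neg {w w' : ℝ → ℝ} (hw : w.HasTemperateGrowth)
    (hw' : ∀ x, HasDerivAt w (w' x) x) (g : 𝓢(ℝ, E)) :
    ∫ x, w x * ‖deriv g x‖ ^ 2 =
      -∫ x, inner ℝ (w' x • deriv g x + w x • deriv (deriv g) x) (g x) := by
  set wg : 𝓢(ℝ, E) := smulLeftCLM E w (derivCLM ℝ E g)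
  have hwg : ⇑wg = fun x => w x • deriv g x := by
    simp only [wg, smulLeftCLM_apply hw, derivCLM_apply]
  have hd (x : ℝ) :
      deriv (fun x => w x • deriv g x) x = w' x • deriv g x + w x • deriv (deriv g) x := by
    have hg' : HasDerivAt (deriv g) (deriv (deriv g) x) x := by
      simpa only [show ⇑(derivCLM ℝ E g) = deriv g from funext (derivCLM_apply ℝ g)] using
        (derivCLM ℝ E g).hasDerivAt x
    rw [add_comm]
    exact ((hw' x).smul hg').deriv
  have h : ∫ x, inner ℝ (wg x) (deriv g x) = -∫ x, inner ℝ (deriv wg x) (g x) :=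
    integral_bilinear_deriv_right_eq_neg_left wg g (innerSL ℝ)
  simpa only [hwg, hd, real_inner_smul_left, real_inner_self_eq_norm_sq] using h

theorem norm_sqrt_one_add_sq_pow_smul_sq (k : ℕ) (x : ℝ) (v : E) :
    ‖√(1 + x ^ 2) ^ k • v‖ ^ 2 = (1 + x ^ 2) ^ k * ‖v‖ ^ 2 := by
  rw [norm_smul, mul_pow, Real.norm_of_nonneg (by positivity), ← pow_mul, mul_comm k, pow_mul,
    Real.sq_sqrt (by positivity)]

theorem norm_inner_deriv_one_add_sq_pow_smul_add_le (k : ℕ) (x : ℝ) (a b c : E) :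
    ‖inner ℝ ((k * (1 + x ^ 2) ^ (k - 1) * (2 * x)) • a + (1 + x ^ 2) ^ k • b) c‖ ≤
      ‖√(1 + x ^ 2) ^ k • b‖ * ‖√(1 + x ^ 2) ^ k • c‖ +
        2 * k * (‖√(1 + x ^ 2) ^ k • a‖ * ‖√(1 + x ^ 2) ^ (k - 1) • c‖) := by
  set s := √(1 + x ^ 2)
  have hs : 1 + x ^ 2 = s ^ 2 := (Real.sq_sqrt (by positivity)).symm
  simp only [norm_smul, Real.norm_of_nonneg (by positivity : 0 ≤ s ^ _)]
  calc ‖inner ℝ ((k * (1 + x ^ 2) ^ (k - 1) * (2 * x)) • a + (1 + x ^ 2) ^ k • b) c‖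
      ≤ (|k * (1 + x ^ 2) ^ (k - 1) * (2 * x)| * ‖a‖ + (1 + x ^ 2) ^ k * ‖b‖) * ‖c‖ := by
        refine (norm_inner_le_norm _ _).trans (mul_le_mul_of_nonneg_right ?_ (norm_nonneg c))
        refine (norm_add_le _ _).trans_eq ?_
        rw [norm_smul, norm_smul, Real.norm_eq_abs, Real.norm_of_nonneg (by positivity)]
    _ ≤ (2 * k * (s ^ k * s ^ (k - 1)) * ‖a‖ + (1 + x ^ 2) ^ k * ‖b‖) * ‖c‖ := by
        gcongr
        exact abs_deriv_one_add_sq_pow_le k x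
    _ = _ := by rw [hs]; ring

theorem integral_norm_sqrt_one_add_sq_pow_smul_deriv_sq_le (k : ℕ) (g : 𝓢(ℝ, E)) :
    ∫ x, ‖√(1 + x ^ 2) ^ k • deriv g x‖ ^ 2 ≤
      2 * (√(∫ x, ‖√(1 + x ^ 2) ^ k • deriv (deriv g) x‖ ^ 2) *
          √(∫ x, ‖√(1 + x ^ 2) ^ k • g x‖ ^ 2)) +
        4 * k ^ 2 * ∫ x, ‖√(1 + x ^ 2) ^ (k - 1) • g x‖ ^ 2 := by
  have hg' : ⇑(derivCLM ℝ E g) = deriv g := funext (derivCLM_apply ℝ g)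
  have hg'' : ⇑(derivCLM ℝ E (derivCLM ℝ E g)) = deriv (deriv g) := by
    rw [← hg']; exact funext (derivCLM_apply ℝ _)
  have memLp_g := memLp_two_sqrt_one_add_sq_pow_smul k g
  have memLp_dg := memLp_two_sqrt_one_add_sq_pow_smul k (derivCLM ℝ E g)
  have memLp_ddg := memLp_two_sqrt_one_add_sq_pow_smul k (derivCLM ℝ E (derivCLM ℝ E g))
  have memLp_g_pred := memLp_two_sqrt_one_add_sq_pow_smul (k - 1) g
  rw [hg'] at memLp_dg
  rw [hg''] at memLp_ddg
  set A := ∫ x, ‖√(1 + x ^ 2) ^ k • deriv g x‖ ^ 2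
  set B := ∫ x, ‖√(1 + x ^ 2) ^ (k - 1) • g x‖ ^ 2
  set P := √(∫ x, ‖√(1 + x ^ 2) ^ k • deriv (deriv g) x‖ ^ 2) *
    √(∫ x, ‖√(1 + x ^ 2) ^ k • g x‖ ^ 2)
  have int_ddg_g := memLp_ddg.integrable_norm_mul_norm memLp_g
  have int_dg_g_pred := (memLp_dg.integrable_norm_mul_norm memLp_g_pred).const_mul (2 * k)
  have hIBP : A ≤ P + 2 * k * (√A * √B) :=
    calc A = -∫ x : ℝ, inner ℝ ((k * (1 + x ^ 2) ^ (k - 1) * (2 * x)) • deriv g x +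
          (1 + x ^ 2) ^ k • deriv (deriv g) x) (g x) := by
          simp only [A, norm_sqrt_one_add_sq_pow_smul_sq]
          exact integral_mul_norm_deriv_sq_eq_neg (by fun_prop) (hasDerivAt_one_add_sq_pow k) g
      _ ≤ ∫ x : ℝ, (‖√(1 + x ^ 2) ^ k • deriv (deriv g) x‖ * ‖√(1 + x ^ 2) ^ k • g x‖ +
          2 * k * (‖√(1 + x ^ 2) ^ k • deriv g x‖ * ‖√(1 + x ^ 2) ^ (k - 1) • g x‖)) :=
        (neg_le_abs _).trans (norm_integral_le_of_norm_le (int_ddg_g.add int_dg_g_pred)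
          (.of_forall fun x => norm_inner_deriv_one_add_sq_pow_smul_add_le k x _ _ _))
      _ ≤ P + 2 * k * (√A * √B) := by
        rw [integral_add int_ddg_g int_dg_g_pred, integral_const_mul]
        gcongr
        · exact integral_norm_mul_norm_le_sqrt_mul_sqrt memLp_ddg memLp_g
        · exact integral_norm_mul_norm_le_sqrt_mul_sqrt memLp_dg memLp_g_pred
  have hA : √A ^ 2 = A := Real.sq_sqrt (integral_nonneg fun _ => by positivity)
  have hB : √B ^ 2 = B := Real.sq_sqrt (integral_nonneg fun _ => by positivity)
  have hP : 0 ≤ P := by positivity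
  nlinarith [sq_nonneg (√A - 2 * k * √B)]

end Schwartz

theorem weighted_interpolation_by_parts_first_general (j k : ℕ) (hj : 1 ≤ j) :
    ∃ c : ℝ, 0 < c ∧ ∀ f : SchwartzMap ℝ ℂ,
      (∫ x : ℝ, ‖(Real.sqrt (1 + x ^ 2) ^ k : ℝ) • iteratedDeriv j (⇑f) x‖ ^ 2) ≤
        c * Real.sqrt (∫ x : ℝ,
            ‖(Real.sqrt (1 + x ^ 2) ^ k : ℝ) • iteratedDeriv (j + 1) (⇑f) x‖ ^ 2) *
          Real.sqrt (∫ x : ℝ,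
            ‖(Real.sqrt (1 + x ^ 2) ^ k : ℝ) • iteratedDeriv (j - 1) (⇑f) x‖ ^ 2) +
        c * ∫ x : ℝ,
          ‖(Real.sqrt (1 + x ^ 2) ^ (k - 1) : ℝ) • iteratedDeriv (j - 1) (⇑f) x‖ ^ 2 := by
  refine ⟨2 + 4 * k ^ 2, by positivity, fun f => ?_⟩
  obtain ⟨n, rfl⟩ : ∃ n, j = n + 1 := ⟨j - 1, by omega⟩
  rw [Nat.add_sub_cancel, iteratedDeriv_succ, iteratedDeriv_succ, iteratedDeriv_succ,
    ← coe_iterate_derivCLM]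
  set g := (⇑(derivCLM ℝ ℂ))^[n] f
  have h := integral_norm_sqrt_one_add_sq_pow_smul_deriv_sq_le k g
  have hP : 0 ≤ √(∫ x : ℝ, ‖√(1 + x ^ 2) ^ k • deriv (deriv g) x‖ ^ 2) *
      √(∫ x : ℝ, ‖√(1 + x ^ 2) ^ k • g x‖ ^ 2) := by positivity
  have hQ : 0 ≤ ∫ x : ℝ, ‖√(1 + x ^ 2) ^ (k - 1) • g x‖ ^ 2 :=
    integral_nonneg fun _ => by positivity
  nlinarith [mul_nonneg (sq_nonneg (k : ℝ)) hP]

/-- **Lemma 2.5, first inequality.** For integers `j, k ≥ 1` there is `c = c(k,j) > 0`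
such that for every Schwartz `f`,
`‖⟨x⟩^k ∂_x^j f‖₂² ≤ c ‖⟨x⟩^k ∂_x^{j+1} f‖₂ ‖⟨x⟩^k ∂_x^{j-1} f‖₂ + c ‖⟨x⟩^{k-1} ∂_x^{j-1} f‖₂²`. -/
theorem weighted_interpolation_by_parts_first (j k : ℕ) (hj : 1 ≤ j) (hk : 1 ≤ k) :
    ∃ c : ℝ, 0 < c ∧ ∀ f : SchwartzMap ℝ ℂ,
      (∫ x : ℝ, ‖(Real.sqrt (1 + x ^ 2) ^ k : ℝ) • iteratedDeriv j (⇑f) x‖ ^ 2) ≤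
        c * Real.sqrt (∫ x : ℝ,
            ‖(Real.sqrt (1 + x ^ 2) ^ k : ℝ) • iteratedDeriv (j + 1) (⇑f) x‖ ^ 2) *
          Real.sqrt (∫ x : ℝ,
            ‖(Real.sqrt (1 + x ^ 2) ^ k : ℝ) • iteratedDeriv (j - 1) (⇑f) x‖ ^ 2) +
        c * ∫ x : ℝ,
          ‖(Real.sqrt (1 + x ^ 2) ^ (k - 1) : ℝ) • iteratedDeriv (j - 1) (⇑f) x‖ ^ 2 :=
  weighted_interpolation_by_parts_first_general j k hj
end

section
/- (Summed Sobolev embedding (3.16)/(a010).) There exists a universal constant C > 0 such that for every continuously differentiable function f : ℝ → ℂ, ∑_{j∈ℤ} sup_{x∈[j,j+1]} |f(x)| ≤ C ( ‖⟨x⟩ f‖₂ + ‖⟨x⟩ f'‖₂ ), where the right-hand side may be +∞. -/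
/-!
On `I = [a, a+1]` the fundamental theorem of calculus, averaged over `y ∈ I`, gives
`sup_I |f| ≤ ∫_I |f| + ∫_I |f'|`, hence `(sup_I |f|)² ≤ 2 ∫_I (|f|² + |f'|²)` by Cauchy–Schwarz.
Since `1 + a² ≤ 3 (1 + y²)` for `y ∈ I`, summing over `I_j = [j, j+1]` yields
`∑_j ⟨j⟩² (sup_{I_j} |f|)² ≤ 6 (‖⟨x⟩f‖₂² + ‖⟨x⟩f'‖₂²)`, and Cauchy–Schwarz against the summable
weights `⟨j⟩⁻²` bounds `∑_j sup_{I_j} |f|` by `(6 ∑_j ⟨j⟩⁻²)^{1/2} (‖⟨x⟩f‖₂ + ‖⟨x⟩f'‖₂)`.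
-/

open MeasureTheory Set ENNReal

namespace ENNReal

theorem add_sq_le (a b : ℝ≥0∞) : (a + b) ^ 2 ≤ 2 * (a ^ 2 + b ^ 2) := by
  have h := rpow_add_le_mul_rpow_add_rpow a b one_le_two
  norm_num [rpow_two] at h
  exact h

theorem sq_lintegral_mul_le {α : Type*} [MeasurableSpace α] {μ : Measure α} {f g : α → ℝ≥0∞}
    (hf : AEMeasurable f μ) (hg : AEMeasurable g μ) :
    (∫⁻ x, f x * g x ∂μ) ^ 2 ≤ (∫⁻ x, f x ^ 2 ∂μ) * ∫⁻ x, g x ^ 2 ∂μ := by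
  have holder := lintegral_mul_le_Lp_mul_Lq μ Real.HolderConjugate.two_two hf hg
  simp only [Pi.mul_apply, rpow_two] at holder
  calc (∫⁻ x, f x * g x ∂μ) ^ 2
      ≤ ((∫⁻ x, f x ^ 2 ∂μ) ^ (1 / 2 : ℝ) * (∫⁻ x, g x ^ 2 ∂μ) ^ (1 / 2 : ℝ)) ^ 2 :=
        pow_le_pow_left' holder 2
    _ = (∫⁻ x, f x ^ 2 ∂μ) * ∫⁻ x, g x ^ 2 ∂μ := by
        rw [mul_pow, ← rpow_two, ← rpow_two, ← rpow_mul, ← rpow_mul]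
        norm_num

theorem sq_lintegral_le_measure_univ_mul {α : Type*} [MeasurableSpace α] {μ : Measure α}
    {g : α → ℝ≥0∞} (hg : AEMeasurable g μ) :
    (∫⁻ x, g x ∂μ) ^ 2 ≤ μ univ * ∫⁻ x, g x ^ 2 ∂μ := by
  simpa using sq_lintegral_mul_le aemeasurable_const hg (f := fun _ => 1)

theorem sq_tsum_mul_le {ι : Type*} (f g : ι → ℝ≥0∞) :
    (∑' i, f i * g i) ^ 2 ≤ (∑' i, f i ^ 2) * ∑' i, g i ^ 2 := by
  let _ : MeasurableSpace ι := ⊤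
  simpa only [lintegral_count] using
    sq_lintegral_mul_le (μ := Measure.count) (measurable_from_top (f := f)).aemeasurable
      (measurable_from_top (f := g)).aemeasurable

end ENNReal

theorem tsum_setLIntegral_Icc_intCast (g : ℝ → ℝ≥0∞) :
    ∑' j : ℤ, ∫⁻ x in Icc (j : ℝ) (j + 1), g x = ∫⁻ x, g x := by
  simp_rw [← setLIntegral_congr (Ico_ae_eq_Icc (μ := volume))]
  rw [← lintegral_iUnion (fun _ => measurableSet_Ico) (pairwise_disjoint_Ico_intCast ℝ),
    iUnion_Ico_intCast, Measure.restrict_univ]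

theorem eLpNorm_two_sq {α ε : Type*} [MeasurableSpace α] [ENorm ε] {μ : Measure α} (g : α → ε) :
    eLpNorm g 2 μ ^ 2 = ∫⁻ x, ‖g x‖ₑ ^ 2 ∂μ := by
  simpa [rpow_two] using eLpNorm_nnreal_pow_eq_lintegral (f := g) (μ := μ) (p := 2) two_ne_zero

theorem summable_inv_one_add_sq_int : Summable fun j : ℤ => (1 + (j : ℝ) ^ 2)⁻¹ := by
  refine (Real.summable_one_div_int_pow.2 one_lt_two).of_norm_bounded_eventually ?_
  filter_upwards [Filter.eventually_cofinite_ne 0] with j hj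
  rw [Real.norm_of_nonneg (by positivity), one_div]
  exact inv_anti₀ (by positivity) (by linarith)

theorem one_add_sq_le_three_mul_one_add_sq {x y : ℝ} (h : |x - y| ≤ 1) :
    1 + y ^ 2 ≤ 3 * (1 + x ^ 2) := by
  have h' : (x - y) ^ 2 ≤ 1 := sq_le_one_iff_abs_le_one _ |>.2 h
  nlinarith [sq_nonneg (x + (x - y))]

section LocalSobolev

variable {E : Type*} [NormedAddCommGroup E] [NormedSpace ℝ E]

theorem enorm_sqrt_one_add_sq_smul_sq (x : ℝ) (v : E) :
    ‖Real.sqrt (1 + x ^ 2) • v‖ₑ ^ 2 = ENNReal.ofReal (1 + x ^ 2) * ‖v‖ₑ ^ 2 := by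
  rw [enorm_smul, Real.enorm_of_nonneg (Real.sqrt_nonneg _), mul_pow,
    ← ofReal_pow (Real.sqrt_nonneg _), Real.sq_sqrt (by positivity)]

variable [CompleteSpace E] {f : ℝ → E}

theorem enorm_sub_le_setLIntegral_enorm_deriv (hf : ContDiff ℝ 1 f) {a b x y : ℝ}
    (hx : x ∈ Icc a b) (hy : y ∈ Icc a b) :
    ‖f x - f y‖ₑ ≤ ∫⁻ t in Icc a b, ‖deriv f t‖ₑ := by
  have ftc : ∫ t in y..x, deriv f t = f x - f y :=
    intervalIntegral.integral_deriv_eq_sub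
      (fun t _ => (hf.differentiable one_ne_zero).differentiableAt)
      ((hf.continuous_deriv le_rfl).intervalIntegrable y x)
  calc ‖f x - f y‖ₑ = ‖∫ t in uIoc y x, deriv f t‖ₑ := by
        rw [← ftc, ← ofReal_norm, ← ofReal_norm,
          intervalIntegral.norm_integral_eq_norm_integral_uIoc]
    _ ≤ ∫⁻ t in uIoc y x, ‖deriv f t‖ₑ := enorm_integral_le_lintegral_enorm _
    _ ≤ ∫⁻ t in Icc a b, ‖deriv f t‖ₑ :=
        lintegral_mono_set (uIoc_subset_uIcc.trans (uIcc_subset_Icc hy hx))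

theorem volume_Icc_mul_enorm_le (hf : ContDiff ℝ 1 f) {a b x : ℝ} (hx : x ∈ Icc a b) :
    volume (Icc a b) * ‖f x‖ₑ ≤
      (∫⁻ y in Icc a b, ‖f y‖ₑ) + volume (Icc a b) * ∫⁻ t in Icc a b, ‖deriv f t‖ₑ := by
  calc volume (Icc a b) * ‖f x‖ₑ = ∫⁻ _ in Icc a b, ‖f x‖ₑ := by rw [setLIntegral_const, mul_comm]
    _ ≤ ∫⁻ y in Icc a b, (‖f y‖ₑ + ∫⁻ t in Icc a b, ‖deriv f t‖ₑ) := by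
        refine setLIntegral_mono' measurableSet_Icc fun y hy => ?_
        calc ‖f x‖ₑ = ‖f y + (f x - f y)‖ₑ := by rw [add_sub_cancel]
          _ ≤ ‖f y‖ₑ + ‖f x - f y‖ₑ := enorm_add_le _ _
          _ ≤ _ := by gcongr; exact enorm_sub_le_setLIntegral_enorm_deriv hf hx hy
    _ = _ := by rw [lintegral_add_right _ measurable_const, setLIntegral_const, mul_comm]

theorem iSup_enorm_Icc_le (hf : ContDiff ℝ 1 f) (a : ℝ) :
    ⨆ x ∈ Icc a (a + 1), ‖f x‖ₑ ≤
      (∫⁻ y in Icc a (a + 1), ‖f y‖ₑ) + ∫⁻ y in Icc a (a + 1), ‖deriv f y‖ₑ :=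
  iSup₂_le fun _ hx => by simpa [Real.volume_Icc] using volume_Icc_mul_enorm_le hf hx

theorem sq_iSup_enorm_Icc_le (hf : ContDiff ℝ 1 f) (a : ℝ) :
    (⨆ x ∈ Icc a (a + 1), ‖f x‖ₑ) ^ 2 ≤
      2 * ∫⁻ y in Icc a (a + 1), (‖f y‖ₑ ^ 2 + ‖deriv f y‖ₑ ^ 2) := by
  have cauchy_schwarz : ∀ g : ℝ → ℝ≥0∞, Measurable g →
      (∫⁻ y in Icc a (a + 1), g y) ^ 2 ≤ ∫⁻ y in Icc a (a + 1), g y ^ 2 := fun g hg => by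
    simpa [Real.volume_Icc] using
      sq_lintegral_le_measure_univ_mul (μ := volume.restrict (Icc a (a + 1))) hg.aemeasurable
  have hmf : Measurable fun y => ‖f y‖ₑ := hf.continuous.enorm.measurable
  have hmf' : Measurable fun y => ‖deriv f y‖ₑ := (hf.continuous_deriv le_rfl).enorm.measurable
  calc (⨆ x ∈ Icc a (a + 1), ‖f x‖ₑ) ^ 2
      ≤ ((∫⁻ y in Icc a (a + 1), ‖f y‖ₑ) + ∫⁻ y in Icc a (a + 1), ‖deriv f y‖ₑ) ^ 2 :=
        pow_le_pow_left' (iSup_enorm_Icc_le hf a) 2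
    _ ≤ 2 * ((∫⁻ y in Icc a (a + 1), ‖f y‖ₑ) ^ 2 +
          (∫⁻ y in Icc a (a + 1), ‖deriv f y‖ₑ) ^ 2) :=
        ENNReal.add_sq_le _ _
    _ ≤ 2 * ((∫⁻ y in Icc a (a + 1), ‖f y‖ₑ ^ 2) +
          ∫⁻ y in Icc a (a + 1), ‖deriv f y‖ₑ ^ 2) := by
        gcongr
        exacts [cauchy_schwarz _ hmf, cauchy_schwarz _ hmf']
    _ = _ := by rw [← lintegral_add_left (hmf.pow_const 2)]

theorem sq_bracket_mul_iSup_enorm_Icc_le (hf : ContDiff ℝ 1 f) (a : ℝ) :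
    (ENNReal.ofReal (Real.sqrt (1 + a ^ 2)) * ⨆ x ∈ Icc a (a + 1), ‖f x‖ₑ) ^ 2 ≤
      6 * ∫⁻ y in Icc a (a + 1),
        (‖Real.sqrt (1 + y ^ 2) • f y‖ₑ ^ 2 + ‖Real.sqrt (1 + y ^ 2) • deriv f y‖ₑ ^ 2) := by
  have weight : ∀ y ∈ Icc a (a + 1),
      ENNReal.ofReal (1 + a ^ 2) ≤ 3 * ENNReal.ofReal (1 + y ^ 2) := fun y hy => by
    rw [← ofReal_ofNat, ← ofReal_mul (by norm_num)]
    exact ofReal_le_ofReal <| one_add_sq_le_three_mul_one_add_sq <|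
      abs_le.2 ⟨by linarith [hy.1], by linarith [hy.2]⟩
  calc (ENNReal.ofReal (Real.sqrt (1 + a ^ 2)) * ⨆ x ∈ Icc a (a + 1), ‖f x‖ₑ) ^ 2
      = ENNReal.ofReal (1 + a ^ 2) * (⨆ x ∈ Icc a (a + 1), ‖f x‖ₑ) ^ 2 := by
        rw [mul_pow, ← ofReal_pow (Real.sqrt_nonneg _), Real.sq_sqrt (by positivity)]
    _ ≤ ENNReal.ofReal (1 + a ^ 2) *
          (2 * ∫⁻ y in Icc a (a + 1), (‖f y‖ₑ ^ 2 + ‖deriv f y‖ₑ ^ 2)) := by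
        gcongr; exact sq_iSup_enorm_Icc_le hf a
    _ = 2 * ∫⁻ y in Icc a (a + 1),
          ENNReal.ofReal (1 + a ^ 2) * (‖f y‖ₑ ^ 2 + ‖deriv f y‖ₑ ^ 2) := by
        rw [lintegral_const_mul' _ _ ofReal_ne_top]; ring
    _ ≤ 2 * ∫⁻ y in Icc a (a + 1),
          3 * (ENNReal.ofReal (1 + y ^ 2) * (‖f y‖ₑ ^ 2 + ‖deriv f y‖ₑ ^ 2)) := by
        gcongr 1
        refine setLIntegral_mono' measurableSet_Icc fun y hy => ?_
        rw [← mul_assoc]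
        gcongr
        exact weight y hy
    _ = _ := by
        simp_rw [enorm_sqrt_one_add_sq_smul_sq, ← mul_add]
        rw [lintegral_const_mul' _ _ ofNat_ne_top, ← mul_assoc]
        norm_num

theorem tsum_sq_bracket_mul_iSup_enorm_le (hf : ContDiff ℝ 1 f) :
    ∑' j : ℤ,
        (ENNReal.ofReal (Real.sqrt (1 + (j : ℝ) ^ 2)) * ⨆ x ∈ Icc (j : ℝ) (j + 1), ‖f x‖ₑ) ^ 2 ≤
      6 * (eLpNorm (fun x : ℝ => Real.sqrt (1 + x ^ 2) • f x) 2 volume ^ 2 +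
        eLpNorm (fun x : ℝ => Real.sqrt (1 + x ^ 2) • deriv f x) 2 volume ^ 2) := by
  have hm : Measurable fun x : ℝ => ‖Real.sqrt (1 + x ^ 2) • f x‖ₑ ^ 2 := by
    have : Continuous fun x : ℝ => Real.sqrt (1 + x ^ 2) • f x := by fun_prop
    exact this.enorm.measurable.pow_const 2
  calc _ ≤ ∑' j : ℤ, 6 * ∫⁻ y in Icc (j : ℝ) (j + 1),
          (‖Real.sqrt (1 + y ^ 2) • f y‖ₑ ^ 2 + ‖Real.sqrt (1 + y ^ 2) • deriv f y‖ₑ ^ 2) :=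
        ENNReal.tsum_le_tsum fun j => sq_bracket_mul_iSup_enorm_Icc_le hf j
    _ = _ := by
        rw [ENNReal.tsum_mul_left, tsum_setLIntegral_Icc_intCast, lintegral_add_left hm,
          eLpNorm_two_sq, eLpNorm_two_sq]

end LocalSobolev

theorem ofReal_tsum_inv_one_add_sq_int :
    ENNReal.ofReal (∑' j : ℤ, (1 + (j : ℝ) ^ 2)⁻¹) =
      ∑' j : ℤ, (ENNReal.ofReal (Real.sqrt (1 + (j : ℝ) ^ 2)))⁻¹ ^ 2 := by
  rw [ofReal_tsum_of_nonneg (fun j => by positivity) summable_inv_one_add_sq_int]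
  refine tsum_congr fun j => ?_
  rw [← ofReal_inv_of_pos (by positivity), ← ofReal_pow (by positivity), inv_pow,
    Real.sq_sqrt (by positivity)]

/-- **Summed Sobolev embedding (3.16)/(a010).** There is a universal `C > 0` such that
for every `C¹` function `f : ℝ → ℂ`,
`∑_{j∈ℤ} sup_{x∈[j,j+1]} |f(x)| ≤ C (‖⟨x⟩f‖₂ + ‖⟨x⟩f'‖₂)`
(both sides interpreted in `[0,∞]`). -/
theorem summed_sobolev_embedding :
    ∃ C : ℝ, 0 < C ∧ ∀ f : ℝ → ℂ, ContDiff ℝ 1 f →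
      (∑' j : ℤ, ⨆ x ∈ Set.Icc (j : ℝ) ((j : ℝ) + 1), (‖f x‖₊ : ENNReal)) ≤
        ENNReal.ofReal C *
          (eLpNorm (fun x : ℝ => (Real.sqrt (1 + x ^ 2) : ℝ) • f x) 2 volume +
            eLpNorm (fun x : ℝ => (Real.sqrt (1 + x ^ 2) : ℝ) • deriv f x) 2 volume) := by
  set S := ∑' j : ℤ, (1 + (j : ℝ) ^ 2)⁻¹
  have hS : 0 < S := summable_inv_one_add_sq_int.tsum_pos (fun j => by positivity) 0 (by simp)
  refine ⟨Real.sqrt (6 * S), by positivity, fun f hf => ?_⟩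
  set A := eLpNorm (fun x : ℝ => (Real.sqrt (1 + x ^ 2) : ℝ) • f x) 2 volume
  set B := eLpNorm (fun x : ℝ => (Real.sqrt (1 + x ^ 2) : ℝ) • deriv f x) 2 volume
  set w : ℤ → ℝ≥0∞ := fun j => ENNReal.ofReal (Real.sqrt (1 + (j : ℝ) ^ 2))
  have hw : ∀ j, w j ≠ 0 := fun j => (ofReal_pos.2 (by positivity)).ne'
  simp only [← enorm_eq_nnnorm]
  rw [← ENNReal.pow_le_pow_left_iff two_ne_zero]
  calc (∑' j : ℤ, ⨆ x ∈ Icc (j : ℝ) (j + 1), ‖f x‖ₑ) ^ 2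
      = (∑' j : ℤ, (w j)⁻¹ * (w j * ⨆ x ∈ Icc (j : ℝ) (j + 1), ‖f x‖ₑ)) ^ 2 := by
        simp_rw [ENNReal.inv_mul_cancel_left (hw _) ofReal_ne_top]
    _ ≤ (∑' j, (w j)⁻¹ ^ 2) * ∑' j : ℤ, (w j * ⨆ x ∈ Icc (j : ℝ) (j + 1), ‖f x‖ₑ) ^ 2 :=
        sq_tsum_mul_le _ _
    _ ≤ (∑' j, (w j)⁻¹ ^ 2) * (6 * (A ^ 2 + B ^ 2)) := by
        gcongr; exact tsum_sq_bracket_mul_iSup_enorm_le hf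
    _ ≤ (∑' j, (w j)⁻¹ ^ 2) * (6 * (A + B) ^ 2) := by
        gcongr; exact pow_add_pow_le zero_le zero_le two_ne_zero
    _ = (ENNReal.ofReal (Real.sqrt (6 * S)) * (A + B)) ^ 2 := by
        rw [mul_pow, ← ofReal_pow (by positivity), Real.sq_sqrt (by positivity),
          ofReal_mul (by norm_num), ofReal_ofNat, ofReal_tsum_inv_one_add_sq_int]
        ring
end
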